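/- Let H be a {2,3}-uniform linear hypergraph and let C = v_1, h_1, v_2, h_2, ..., v_ℓ, h_ℓ be a Berge cycle of maximum length ℓ in H (H contains no longer Berge cycle). Let {u_1, u_2, u_3} be a hyperedge of H with u_1, u_2, u_3 all outside {v_1, ..., v_ℓ}. Then for all 1 <= i < j <= 3: (S(u_i) ∪ L(u_i)) ∩ (S(u_j) ∪ L(u_j))^- = ∅ and (S(u_i) ∪ L(u_i)) ∩ S(u_j)^{--} = ∅. -/

import Mathlib

/-- A Berge path of length `k` in a hypergraph `H`: `k+1` distinct vertices
`v 0, …, v k` and `k` distinct hyperedges `h 0, …, h (k-1)` of `H` with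
`{v i, v (i+1)} ⊆ h i` for all `i`. -/
def HasBergePath {V : Type*} (H : Finset (Finset V)) (k : ℕ) : Prop :=
  ∃ (v : Fin (k + 1) → V) (h : Fin k → Finset V),
    Function.Injective v ∧ Function.Injective h ∧
    ∀ i : Fin k, h i ∈ H ∧ v i.castSucc ∈ h i ∧ v i.succ ∈ h i

/-- A hypergraph is linear if any two distinct hyperedges share at most one vertex. -/
def IsLinear {V : Type*} [DecidableEq V] (H : Finset (Finset V)) : Prop :=
  ∀ e₁ ∈ H, ∀ e₂ ∈ H, e₁ ≠ e₂ → (e₁ ∩ e₂).card ≤ 1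

/-- The number of edges of the two-shadow `∂H` of a hypergraph `H`, i.e. the number
of `2`-element vertex sets contained in some hyperedge of `H`. -/
def shadowEdgeCount {V : Type*} [DecidableEq V] (H : Finset (Finset V)) : ℕ :=
  (H.biUnion fun e => e.powersetCard 2).card
/-- A Berge cycle of length `ℓ ≥ 2` in a hypergraph `H`: `ℓ` distinct vertices
`v 0, …, v (ℓ-1)` and `ℓ` distinct hyperedges `h 0, …, h (ℓ-1)` of `H` with
`{v i, v (i+1)} ⊆ h i` for all `i`, indices modulo `ℓ`. -/
def HasBergeCycle {V : Type*} (H : Finset (Finset V)) (ℓ : ℕ) : Prop :=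
  ∃ (hℓ : 2 ≤ ℓ) (v : Fin ℓ → V) (h : Fin ℓ → Finset V),
    Function.Injective v ∧ Function.Injective h ∧
    ∀ i : Fin ℓ, h i ∈ H ∧ v i ∈ h i ∧
      v ⟨(i.val + 1) % ℓ, Nat.mod_lt _ (by omega)⟩ ∈ h i

/-- The cyclic successor of an index `i : Fin ℓ`. -/
def cnext {ℓ : ℕ} (hℓ : 0 < ℓ) (i : Fin ℓ) : Fin ℓ :=
  ⟨(i.val + 1) % ℓ, Nat.mod_lt _ hℓ⟩

/-- For a Berge cycle with defining vertices `v` and defining hyperedges `h`, and a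
vertex `u` outside the cycle: `S(u)` is the set of defining vertices joined to `u` by
some hyperedge of `H` that is not a defining hyperedge of the cycle. -/
def Sset {V : Type*} {ℓ : ℕ} (H : Finset (Finset V))
    (v : Fin ℓ → V) (h : Fin ℓ → Finset V) (u : V) : Set V :=
  {w | (∃ i : Fin ℓ, w = v i) ∧ ∃ e ∈ H, (∀ j : Fin ℓ, e ≠ h j) ∧ u ∈ e ∧ w ∈ e}

/-- `L(u) = {v i : h i = {v i, v (i+1), u}}`. -/
def Lset {V : Type*} [DecidableEq V] {ℓ : ℕ} (hℓ : 0 < ℓ)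
    (v : Fin ℓ → V) (h : Fin ℓ → Finset V) (u : V) : Set V :=
  {w | ∃ i : Fin ℓ, w = v i ∧ h i = {v i, v (cnext hℓ i), u}}

/-- The left shift `A⁻ = {v (i-1) : v i ∈ A} = {v i : v (i+1) ∈ A}` of a set of
defining vertices of the cycle, indices modulo `ℓ`. -/
def shiftMinus {V : Type*} {ℓ : ℕ} (hℓ : 0 < ℓ)
    (v : Fin ℓ → V) (A : Set V) : Set V :=
  {w | ∃ i : Fin ℓ, w = v i ∧ v (cnext hℓ i) ∈ A}


/-!
If a defining vertex `v a` lies in `S(uᵢ) ∪ L(uᵢ)` through a hyperedge `f ∋ uᵢ`, and `v (a + 1)`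
lies in `S(uⱼ) ∪ L(uⱼ)` (or `v (a + 2)` in `S(uⱼ)`), then there is a hyperedge `g ∋ uⱼ`
through `v (a + s)`, `s ∈ {1, 2}`, which is not a defining hyperedge of the arc
`v (a + s), …, v (a + ℓ) = v a`. Replacing the remaining part of `C` by the detour
`v a, f, uᵢ, {u₀, u₁, u₂}, uⱼ, g, v (a + s)` gives a Berge cycle of length `ℓ - s + 3 > ℓ`.
Linearity is what makes `f ≠ g`: both would otherwise meet `{u₀, u₁, u₂}` in `{uᵢ, uⱼ}`.
-/

section BergePath

variable {V : Type*} {H : Finset (Finset V)} {k : ℕ}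

def IsBergePath (H : Finset (Finset V)) (p : Fin (k + 1) → V) (e : Fin k → Finset V) : Prop :=
  Function.Injective p ∧ Function.Injective e ∧
    ∀ i : Fin k, e i ∈ H ∧ p i.castSucc ∈ e i ∧ p i.succ ∈ e i

theorem IsBergePath.cons {p : Fin (k + 1) → V} {e : Fin k → Finset V} (hp : IsBergePath H p e)
    {y : V} {g : Finset V} (hy : y ∉ Set.range p) (hg : g ∈ H) (hge : g ∉ Set.range e)
    (hyg : y ∈ g) (hpg : p 0 ∈ g) :
    IsBergePath H (Fin.cons y p) (Fin.cons g e) := by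
  refine ⟨Fin.cons_injective_iff.2 ⟨hy, hp.1⟩, Fin.cons_injective_iff.2 ⟨hge, hp.2.1⟩, ?_⟩
  intro i
  cases i using Fin.cases with
  | zero => simpa using ⟨hg, hyg, hpg⟩
  | succ i => simpa [← Fin.succ_castSucc] using hp.2.2 i

theorem IsBergePath.hasBergeCycle {p : Fin (k + 1) → V} {e : Fin k → Finset V}
    (hp : IsBergePath H p e) (hk : 1 ≤ k) {f : Finset V} (hf : f ∈ H) (hfe : f ∉ Set.range e)
    (hlast : p (Fin.last k) ∈ f) (hfirst : p 0 ∈ f) :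
    HasBergeCycle H (k + 1) := by
  refine ⟨by omega, p, Fin.snoc e f, hp.1, Fin.snoc_injective_iff.2 ⟨hp.2.1, hfe⟩, ?_⟩
  intro i
  cases i using Fin.lastCases with
  | last =>
    have hnext : (⟨((Fin.last k).val + 1) % (k + 1), Nat.mod_lt _ (by omega)⟩ : Fin (k + 1))
        = 0 := by
      ext; simp
    rw [hnext]
    simpa using ⟨hf, hlast, hfirst⟩
  | cast i =>
    have hnext : (⟨(i.castSucc.val + 1) % (k + 1), Nat.mod_lt _ (by omega)⟩ : Fin (k + 1))
        = i.succ := by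
      ext; simp [Nat.mod_eq_of_lt]
    rw [hnext]
    simpa using hp.2.2 i

end BergePath

theorem IsLinear.eq_of_pair_subset {V : Type*} [DecidableEq V] {H : Finset (Finset V)}
    (hlin : IsLinear H) {e₁ e₂ : Finset V} (he₁ : e₁ ∈ H) (he₂ : e₂ ∈ H) {x y : V} (hxy : x ≠ y)
    (hx₁ : x ∈ e₁) (hy₁ : y ∈ e₁) (hx₂ : x ∈ e₂) (hy₂ : y ∈ e₂) : e₁ = e₂ := by
  by_contra hne
  have hsub : ({x, y} : Finset V) ⊆ e₁ ∩ e₂ := by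
    simp [Finset.insert_subset_iff, hx₁, hy₁, hx₂, hy₂]
  have := (Finset.card_le_card hsub).trans (hlin e₁ he₁ e₂ he₂ hne)
  simp [Finset.card_pair hxy] at this

theorem cnext_eq_add_one {ℓ : ℕ} [NeZero ℓ] (hℓ : 0 < ℓ) (i : Fin ℓ) : cnext hℓ i = i + 1 := by
  ext
  simp [cnext, Fin.val_add]

section LongestCycle

open Fin.NatCast

theorem Fin.natCast_inj_of_lt {ℓ m n : ℕ} [NeZero ℓ] (hm : m < ℓ) (hn : n < ℓ) :
    (m : Fin ℓ) = n ↔ m = n :=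
  ⟨fun h => CharP.natCast_injOn_Iio (Fin ℓ) ℓ hm hn h, congrArg _⟩

variable {V : Type*} {H : Finset (Finset V)} {ℓ : ℕ} [NeZero ℓ] {v : Fin ℓ → V}
  {h : Fin ℓ → Finset V}

theorem isBergePath_arc (hv : Function.Injective v) (hh : Function.Injective h)
    (hcyc : ∀ i, h i ∈ H ∧ v i ∈ h i ∧ v (i + 1) ∈ h i) (b : Fin ℓ) {k : ℕ} (hk : k < ℓ) :
    IsBergePath H (fun t : Fin (k + 1) => v (b + (t : ℕ))) (fun t : Fin k => h (b + (t : ℕ))) := by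
  refine ⟨fun s t hst => ?_, fun s t hst => ?_, fun t => ?_⟩
  · exact Fin.ext ((Fin.natCast_inj_of_lt (by omega) (by omega)).1 (add_left_cancel (hv hst)))
  · exact Fin.ext ((Fin.natCast_inj_of_lt (by omega) (by omega)).1 (add_left_cancel (hh hst)))
  · simpa [add_assoc] using hcyc (b + (t : ℕ))

theorem hasBergeCycle_of_detour [DecidableEq V] (hlin : IsLinear H) (hv : Function.Injective v)
    (hh : Function.Injective h) (hcyc : ∀ i, h i ∈ H ∧ v i ∈ h i ∧ v (i + 1) ∈ h i)
    {a : Fin ℓ} {s : ℕ} (hs : 1 ≤ s) (hsℓ : s ≤ ℓ) {x y : V} (hxy : x ≠ y)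
    (hx : x ∉ Set.range v) (hy : y ∉ Set.range v)
    {E f g : Finset V} (hE : E ∈ H) (hEv : ∀ i, v i ∉ E) (hxE : x ∈ E) (hyE : y ∈ E)
    (hf : f ∈ H) (hxf : x ∈ f) (hvf : v a ∈ f) (hfh : ∀ i, f = h i → i = a)
    (hg : g ∈ H) (hyg : y ∈ g) (hvg : v (a + s) ∈ g)
    (hgh : ∀ t, s ≤ t → t < ℓ → g ≠ h (a + t)) :
    HasBergeCycle H (ℓ - s + 3) := by
  have harc := isBergePath_arc hv hh hcyc (a + s) (k := ℓ - s) (by omega)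
  have hfg : f ≠ g := fun hfg =>
    hEv a (hlin.eq_of_pair_subset hf hE hxy hxf (hfg ▸ hyg) hxE hyE ▸ hvf)
  have hEg : E ≠ g := fun hEg => hEv _ (hEg ▸ hvg)
  have hEh : ∀ i, E ≠ h i := fun i hEh => hEv i (hEh ▸ (hcyc i).2.1)
  have hgarc : g ∉ Set.range fun t : Fin (ℓ - s) => h (a + s + (t : ℕ)) := by
    rintro ⟨t, ht⟩
    exact hgh (s + t) (by omega) (by omega) (by rw [Nat.cast_add, ← add_assoc]; exact ht.symm)
  have hfarc : f ∉ Set.range fun t : Fin (ℓ - s) => h (a + s + (t : ℕ)) := by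
    rintro ⟨t, ht⟩
    have := hfh _ ht.symm
    rw [add_assoc, add_eq_left, ← Nat.cast_add, ← Nat.cast_zero, Fin.natCast_inj_of_lt] at this
    all_goals omega
  have hpath := (harc.cons (fun ⟨t, ht⟩ => hy ⟨_, ht⟩) hg hgarc hyg (by simpa using hvg)).cons
    (by simpa [hxy] using fun t ht => hx ⟨_, ht⟩) hE
    (by simpa [hEg] using fun t ht => hEh _ ht.symm) hxE (by simpa using hyE)
  refine hpath.hasBergeCycle (by omega) hf ?_ ?_ (by simpa using hxf)
  · simpa [hfg] using ⟨fun hfE => hEv a (hfE ▸ hvf), fun t ht => hfarc ⟨t, ht⟩⟩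
  · simpa [add_assoc, ← Nat.cast_add, Nat.add_sub_cancel' hsℓ] using hvf

theorem apply_mem_shiftMinus_iff (hv : Function.Injective v) (hℓ : 0 < ℓ) {A : Set V}
    {a : Fin ℓ} : v a ∈ shiftMinus hℓ v A ↔ v (a + 1) ∈ A := by
  simp [shiftMinus, hv.eq_iff, cnext_eq_add_one]

theorem exists_edge_of_mem_Sset_union_Lset [DecidableEq V] (hv : Function.Injective v)
    (hh : Function.Injective h) (hcyc : ∀ i, h i ∈ H ∧ v i ∈ h i ∧ v (i + 1) ∈ h i)
    (hℓ : 0 < ℓ) {x : V} {a : Fin ℓ}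
    (hx : v a ∈ Sset H v h x ∪ Lset hℓ v h x) :
    ∃ f ∈ H, x ∈ f ∧ v a ∈ f ∧ ∀ i, f = h i → i = a := by
  rcases hx with ⟨-, f, hf, hfh, hxf, hvf⟩ | ⟨b, hb, hbh⟩
  · exact ⟨f, hf, hxf, hvf, fun i hi => absurd hi (hfh i)⟩
  · obtain rfl := hv hb
    exact ⟨h a, (hcyc a).1, by simp [hbh], (hcyc a).2.1, fun i hi => hh hi.symm⟩

theorem exists_edge_of_add_one_mem_Sset_union_Lset [DecidableEq V] (hv : Function.Injective v)
    (hh : Function.Injective h) (hcyc : ∀ i, h i ∈ H ∧ v i ∈ h i ∧ v (i + 1) ∈ h i)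
    (hℓ : 0 < ℓ) {y : V} {a : Fin ℓ}
    (hy : v (a + 1) ∈ Sset H v h y ∪ Lset hℓ v h y ∨ v (a + 1 + 1) ∈ Sset H v h y) :
    ∃ s : ℕ, 1 ≤ s ∧ s ≤ 2 ∧ ∃ g ∈ H, y ∈ g ∧ v (a + s) ∈ g ∧
      ∀ t : ℕ, s ≤ t → t < ℓ → g ≠ h (a + t) := by
  rcases hy with (⟨-, g, hg, hgh, hyg, hvg⟩ | ⟨b, hb, hbh⟩) | ⟨-, g, hg, hgh, hyg, hvg⟩
  · exact ⟨1, le_rfl, one_le_two, g, hg, hyg, by simpa using hvg, fun t _ _ => hgh _⟩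
  · obtain rfl := hv hb
    refine ⟨2, one_le_two, le_rfl, h (a + 1), (hcyc _).1, by simp [hbh],
      by simpa [add_assoc, one_add_one_eq_two] using (hcyc (a + 1)).2.2, fun t ht htℓ hth => ?_⟩
    have hat := hh hth
    rw [add_right_inj, ← Nat.cast_one, Fin.natCast_inj_of_lt (by omega) htℓ] at hat
    omega
  · exact ⟨2, one_le_two, le_rfl, g, hg, hyg,
      by simpa [add_assoc, one_add_one_eq_two] using hvg, fun t _ _ => hgh _⟩

end LongestCycle

theorem claim_triple_shift_disjoint_general {V : Type*} [DecidableEq V]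
    (H : Finset (Finset V))
    (hlin : IsLinear H)
    (ℓ : ℕ) (hℓ2 : 2 ≤ ℓ) (hℓ : 0 < ℓ)
    (v : Fin ℓ → V) (h : Fin ℓ → Finset V)
    (hv : Function.Injective v) (hh : Function.Injective h)
    (hC : ∀ i : Fin ℓ, h i ∈ H ∧ v i ∈ h i ∧ v (cnext hℓ i) ∈ h i)
    (hmax : ∀ ℓ' : ℕ, ℓ < ℓ' → ¬ HasBergeCycle H ℓ')
    (u : Fin 3 → V) (huinj : Function.Injective u)
    (hedge : ({u 0, u 1, u 2} : Finset V) ∈ H)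
    (hout : ∀ (a : Fin 3) (i : Fin ℓ), u a ≠ v i) :
    ∀ i j : Fin 3, i < j →
      (Sset H v h (u i) ∪ Lset hℓ v h (u i)) ∩
        shiftMinus hℓ v (Sset H v h (u j) ∪ Lset hℓ v h (u j)) = ∅ ∧
      (Sset H v h (u i) ∪ Lset hℓ v h (u i)) ∩
        shiftMinus hℓ v (shiftMinus hℓ v (Sset H v h (u j))) = ∅ := by
  intro i j hij
  have : NeZero ℓ := ⟨hℓ.ne'⟩
  have hcyc : ∀ k, h k ∈ H ∧ v k ∈ h k ∧ v (k + 1) ∈ h k := by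
    simpa only [cnext_eq_add_one] using hC
  have huE : ∀ a, u a ∈ ({u 0, u 1, u 2} : Finset V) := by
    intro a; fin_cases a <;> simp
  have hvE : ∀ k, v k ∉ ({u 0, u 1, u 2} : Finset V) := fun k => by
    simp only [Finset.mem_insert, Finset.mem_singleton, not_or]
    exact ⟨(hout 0 k).symm, (hout 1 k).symm, (hout 2 k).symm⟩
  have hu : ∀ a, u a ∉ Set.range v := fun a ⟨k, hk⟩ => hout a k hk.symm
  suffices hdetour : ∀ a : Fin ℓ, v a ∈ Sset H v h (u i) ∪ Lset hℓ v h (u i) →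
      v (a + 1) ∈ Sset H v h (u j) ∪ Lset hℓ v h (u j) ∨ v (a + 1 + 1) ∈ Sset H v h (u j) →
      False by
    refine ⟨Set.eq_empty_of_forall_notMem ?_, Set.eq_empty_of_forall_notMem ?_⟩ <;>
      rintro _ ⟨hx, a, rfl, hy⟩ <;> rw [cnext_eq_add_one] at hy
    · exact hdetour a hx (.inl hy)
    · exact hdetour a hx (.inr ((apply_mem_shiftMinus_iff hv hℓ).1 hy))
  intro a hx hy
  obtain ⟨f, hf, hxf, hvf, hfh⟩ := exists_edge_of_mem_Sset_union_Lset hv hh hcyc hℓ hx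
  obtain ⟨s, hs1, hs2, g, hg, hyg, hvg, hgh⟩ :=
    exists_edge_of_add_one_mem_Sset_union_Lset hv hh hcyc hℓ hy
  exact hmax _ (by omega) (hasBergeCycle_of_detour hlin hv hh hcyc hs1 (by omega)
    (huinj.ne hij.ne) (hu i) (hu j) hedge hvE (huE i) (huE j) hf hxf hvf hfh hg hyg hvg hgh)

/-- Claim 4: if `C` is a longest Berge cycle in a `{2,3}`-uniform linear hypergraph
`H` and `{u 0, u 1, u 2}` is a hyperedge of `H` with all three vertices outside `C`,
then for all `i < j`: `(S(uᵢ) ∪ L(uᵢ)) ∩ (S(uⱼ) ∪ L(uⱼ))⁻ = ∅` and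
`(S(uᵢ) ∪ L(uᵢ)) ∩ S(uⱼ)⁻⁻ = ∅`. -/
theorem claim_triple_shift_disjoint {V : Type*} [Fintype V] [DecidableEq V]
    (H : Finset (Finset V))
    (hunif : ∀ e ∈ H, e.card = 2 ∨ e.card = 3)
    (hlin : IsLinear H)
    (ℓ : ℕ) (hℓ2 : 2 ≤ ℓ) (hℓ : 0 < ℓ)
    (v : Fin ℓ → V) (h : Fin ℓ → Finset V)
    (hv : Function.Injective v) (hh : Function.Injective h)
    (hC : ∀ i : Fin ℓ, h i ∈ H ∧ v i ∈ h i ∧ v (cnext hℓ i) ∈ h i)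
    (hmax : ∀ ℓ' : ℕ, ℓ < ℓ' → ¬ HasBergeCycle H ℓ')
    (u : Fin 3 → V) (huinj : Function.Injective u)
    (hedge : ({u 0, u 1, u 2} : Finset V) ∈ H)
    (hout : ∀ (a : Fin 3) (i : Fin ℓ), u a ≠ v i) :
    ∀ i j : Fin 3, i < j →
      (Sset H v h (u i) ∪ Lset hℓ v h (u i)) ∩
        shiftMinus hℓ v (Sset H v h (u j) ∪ Lset hℓ v h (u j)) = ∅ ∧
      (Sset H v h (u i) ∪ Lset hℓ v h (u i)) ∩
        shiftMinus hℓ v (shiftMinus hℓ v (Sset H v h (u j))) = ∅ :=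
  claim_triple_shift_disjoint_general H hlin ℓ hℓ2 hℓ v h hv hh hC hmax u huinj hedge hout
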